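/- Fix an integer N ≥ 6 and a real c ∈ (0,1). Then the function f(x) = x² - c·(N·(e^x - 1 - x) - ((N-2)/2)·x·(e^x - 1)) satisfies f(x) > 0 for all x > 0. -/

import Mathlib

/-!
Write `P(x) = N (eˣ - 1 - x) - ((N - 2)/2) x (eˣ - 1)`, so that `f(x) = x² - c P(x)`.
The gap `g = x² - P` vanishes at `0` together with its first two derivatives, and
`g'''(x) = eˣ ((N - 6)/2 + ((N - 2)/2) x) ≥ 0` for `x ≥ 0` once `N ≥ 6`; integrating three times
gives `P(x) ≤ x²` on `[0, ∞)`. For `0 ≤ c < 1` this forces `c P(x) < x²` when `x > 0`,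
whatever the sign of `P(x)`.
-/

open Real

lemma nonneg_of_hasDerivAt_of_nonneg {F F' : ℝ → ℝ} (hF : ∀ x, HasDerivAt F (F' x) x)
    (h₀ : 0 ≤ F 0) (hF' : ∀ x, 0 ≤ x → 0 ≤ F' x) {x : ℝ} (hx : 0 ≤ x) : 0 ≤ F x := by
  have hmono : MonotoneOn F (Set.Ici 0) :=
    monotoneOn_of_hasDerivWithinAt_nonneg (convex_Ici 0)
      (fun y _ ↦ (hF y).continuousAt.continuousWithinAt)
      (fun y _ ↦ (hF y).hasDerivWithinAt)
      (fun y hy ↦ hF' y (interior_subset hy))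
  exact h₀.trans (hmono Set.self_mem_Ici hx hx)

lemma mul_lt_of_lt_one_of_le_of_pos {c a b : ℝ} (hc₀ : 0 ≤ c) (hc₁ : c < 1) (hab : a ≤ b) (hb : 0 < b) :
    c * a < b := by
  rcases le_or_gt a 0 with ha | ha
  · nlinarith
  · calc c * a < 1 * a := by gcongr
      _ ≤ b := by linarith

namespace Pohozaev

noncomputable section

variable (n : ℝ)

def gap (x : ℝ) : ℝ := x ^ 2 - (n * (exp x - 1 - x) - ((n - 2) / 2) * x * (exp x - 1))

def gap' (x : ℝ) : ℝ := 2 * x - (n * (exp x - 1) - ((n - 2) / 2) * (exp x - 1 + x * exp x))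

def gap'' (x : ℝ) : ℝ := 2 - 2 * exp x + ((n - 2) / 2) * (x * exp x)

def gap''' (x : ℝ) : ℝ := exp x * ((n - 6) / 2 + ((n - 2) / 2) * x)

lemma hasDerivAt_gap (x : ℝ) : HasDerivAt (gap n) (gap' n x) x := by
  have he := hasDerivAt_exp x
  refine ((hasDerivAt_pow 2 x).sub ((((he.sub_const 1).sub (hasDerivAt_id x)).const_mul n).sub
    (((hasDerivAt_id x).const_mul ((n - 2) / 2)).mul (he.sub_const 1)))).congr_deriv ?_
  simp only [gap', id_eq]
  ring

lemma hasDerivAt_gap' (x : ℝ) : HasDerivAt (gap' n) (gap'' n x) x := by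
  have he := hasDerivAt_exp x
  refine (((hasDerivAt_id x).const_mul 2).sub (((he.sub_const 1).const_mul n).sub
    (((he.sub_const 1).add ((hasDerivAt_id x).mul he)).const_mul ((n - 2) / 2)))).congr_deriv ?_
  simp only [gap'', id_eq]
  ring

lemma hasDerivAt_gap'' (x : ℝ) : HasDerivAt (gap'' n) (gap''' n x) x := by
  have he := hasDerivAt_exp x
  refine (((hasDerivAt_const x (2 : ℝ)).sub (he.const_mul 2)).add
    (((hasDerivAt_id x).mul he).const_mul ((n - 2) / 2))).congr_deriv ?_
  simp only [gap''', id_eq]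
  ring

variable {n}

lemma gap'''_nonneg (hn : 6 ≤ n) {x : ℝ} (hx : 0 ≤ x) : 0 ≤ gap''' n x :=
  mul_nonneg (exp_pos x).le (add_nonneg (by linarith) (mul_nonneg (by linarith) hx))

lemma gap_nonneg (hn : 6 ≤ n) {x : ℝ} (hx : 0 ≤ x) : 0 ≤ gap n x := by
  have h₂ : ∀ y, 0 ≤ y → 0 ≤ gap'' n y := fun _ ↦
    nonneg_of_hasDerivAt_of_nonneg (hasDerivAt_gap'' n) (by simp [gap'']) fun _ ↦ gap'''_nonneg hn
  have h₁ : ∀ y, 0 ≤ y → 0 ≤ gap' n y := fun _ ↦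
    nonneg_of_hasDerivAt_of_nonneg (hasDerivAt_gap' n) (by simp [gap']) h₂
  exact nonneg_of_hasDerivAt_of_nonneg (hasDerivAt_gap n) (by simp [gap]) h₁ hx

end

end Pohozaev

theorem pohozaev_f_pos_high_dim (N : ℕ) (hN : 6 ≤ N)
    (c : ℝ) (hc0 : 0 < c) (hc1 : c < 1)
    (f : ℝ → ℝ)
    (hf : ∀ x : ℝ, f x =
      x ^ 2 - c * ((N : ℝ) * (exp x - 1 - x) - (((N : ℝ) - 2) / 2) * x * (exp x - 1))) :
    ∀ x : ℝ, 0 < x → 0 < f x := by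
  intro x hx
  have hP := sub_nonneg.mp (Pohozaev.gap_nonneg (n := N) (by exact_mod_cast hN) hx.le)
  rw [hf x, sub_pos]
  exact mul_lt_of_lt_one_of_le_of_pos hc0.le hc1 hP (by positivity)
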